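/- Let d ∈ ℕ, θ : Fin d → ℝ, let v ≥ 0 be a variance, and let a : Fin d → ℕ be a multi-index. Define C_{K,k} := (K.choose (2*k)) * ((2*k)! / (k! * 2^k)). Let μ := Measure.pi (fun j : Fin d => gaussianReal (θ j) v) on Fin d → ℝ. Then ∫ ( ∏_{j : Fin d} Σ_{k=0}^{⌊(a j)/2⌋} C_{a j, k} * (−1)^k * v^k * (x j)^(a j − 2*k) ) dμ(x) = ∏_{j : Fin d} (θ j)^(a j). That is, the debiased monomial statistic of an observation X = θ + ε, where ε has independent N(0, v) coordinates, is an unbiased estimator of the monomial ∏_j θ_j^{a_j}. -/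

import Mathlib

/-!
If `ξ ~ N(0, v)` then `E ξ^(2s) = (2s-1)‼ v^s` and the odd moments vanish (Gaussian integration
by parts gives `E ξ^(n+2) = (n+1) v E ξ^n`), so expanding `(θ + ξ)^n` shows that `X ~ N(θ, v)`
has moments `E X^n = gaussianMoment θ v n = ∑_s C(n, 2s) (2s-1)‼ v^s θ^(n-2s)`. The debiased
statistic is `gaussianMoment x (-v) n`, so its expectation is
`∑_k C(n, 2k) (2k-1)‼ (-v)^k gaussianMoment θ v (n - 2k)`. Grouping the terms by `t = k + s`, the
coefficient of `v^t θ^(n-2t)` is `C(n, 2t) (2t-1)‼ ∑_k (-1)^k C(t, k)`, which vanishes unless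
`t = 0`; hence the expectation is `θ^n`. The coordinates are independent, so in several dimensions
the expectation of the product is the product of the expectations.
-/

open MeasureTheory ProbabilityTheory Finset
open scoped NNReal Nat

namespace Nat

theorem factorial_two_mul (k : ℕ) : (2 * k)! = 2 ^ k * k ! * (2 * k - 1)‼ := by
  cases k with
  | zero => rfl
  | succ k =>
    rw [show 2 * (k + 1) = 2 * k + 1 + 1 by ring, factorial_eq_mul_doubleFactorial,
      show 2 * k + 1 + 1 = 2 * (k + 1) by ring, doubleFactorial_two_mul]
    rfl

theorem factorial_two_mul_div (k : ℕ) : (2 * k)! / (k ! * 2 ^ k) = (2 * k - 1)‼ := by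
  rw [factorial_two_mul, mul_comm (2 ^ k), Nat.mul_div_cancel_left _ (by positivity)]

theorem choose_two_mul_mul_doubleFactorial (k s : ℕ) :
    (2 * (k + s)).choose (2 * k) * ((2 * k - 1)‼ * (2 * s - 1)‼) =
      (k + s).choose k * (2 * (k + s) - 1)‼ := by
  have hk := factorial_two_mul k
  have hs := factorial_two_mul s
  have hks := factorial_two_mul (k + s)
  have h2 := choose_mul_factorial_mul_factorial (show 2 * k ≤ 2 * (k + s) by omega)
  have h1 := choose_mul_factorial_mul_factorial (show k ≤ k + s by omega)
  rw [show 2 * (k + s) - 2 * k = 2 * s by omega] at h2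
  rw [add_tsub_cancel_left] at h1
  apply Nat.eq_of_mul_eq_mul_right (show 0 < 2 ^ (k + s) * k ! * s ! from by positivity)
  calc _ = (2 * (k + s)).choose (2 * k) * (2 * k)! * (2 * s)! := by rw [hk, hs, pow_add]; ring
    _ = 2 ^ (k + s) * (k + s)! * (2 * (k + s) - 1)‼ := by rw [h2, hks]
    _ = _ := by rw [← h1]; ring

theorem choose_two_mul_mul_choose_two_mul (n k s : ℕ) :
    n.choose (2 * k) * (2 * k - 1)‼ * ((n - 2 * k).choose (2 * s) * (2 * s - 1)‼) =
      n.choose (2 * (k + s)) * (2 * (k + s) - 1)‼ * (k + s).choose k := by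
  have h := Nat.choose_mul (n := n) (show 2 * k ≤ 2 * (k + s) by omega)
  rw [show 2 * (k + s) - 2 * k = 2 * s by omega] at h
  calc _ = n.choose (2 * k) * (n - 2 * k).choose (2 * s) * ((2 * k - 1)‼ * (2 * s - 1)‼) := by
        ring
    _ = _ := by rw [← h, mul_assoc, choose_two_mul_mul_doubleFactorial]; ring

end Nat

theorem Finset.sum_range_ite_even {M : Type*} [AddCommMonoid M] (n : ℕ) (f : ℕ → M) :
    ∑ i ∈ range (n + 1), (if Even i then f i else 0) = ∑ s ∈ range (n / 2 + 1), f (2 * s) := by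
  rw [← sum_filter]
  refine sum_nbij' (· / 2) (2 * ·) ?_ ?_ ?_ ?_ ?_ <;>
    simp +contextual only [mem_filter, mem_range, Nat.even_iff] <;> intros
  all_goals first | omega | congr 1; omega

section GaussianMoment

variable {R : Type*} [CommRing R]

def gaussianMoment (θ v : R) (n : ℕ) : R :=
  ∑ s ∈ range (n / 2 + 1), ((n.choose (2 * s) * (2 * s - 1)‼ : ℕ) : R) * v ^ s * θ ^ (n - 2 * s)

theorem sum_neg_pow_mul_gaussianMoment (θ v : R) (n : ℕ) :
    ∑ k ∈ range (n / 2 + 1), ((n.choose (2 * k) * (2 * k - 1)‼ : ℕ) : R) * (-v) ^ k *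
      gaussianMoment θ v (n - 2 * k) = θ ^ n := by
  set c : ℕ → R := fun t => ((n.choose (2 * t) * (2 * t - 1)‼ : ℕ) : R) * v ^ t * θ ^ (n - 2 * t)
  have hterm : ∀ t k, k ≤ t → ((n.choose (2 * k) * (2 * k - 1)‼ : ℕ) : R) * (-v) ^ k *
      (((n - 2 * k).choose (2 * (t - k)) * (2 * (t - k) - 1)‼ : ℕ) : R) * v ^ (t - k) *
        θ ^ (n - 2 * k - 2 * (t - k)) = (-1) ^ k * t.choose k * c t := by
    intro t k hkt
    obtain ⟨s, rfl⟩ := Nat.exists_eq_add_of_le hkt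
    have h := congrArg (Nat.cast : ℕ → R) (Nat.choose_two_mul_mul_choose_two_mul n k s)
    simp only [c]
    push_cast at h ⊢
    rw [add_tsub_cancel_left, show n - 2 * k - 2 * s = n - 2 * (k + s) by omega, neg_pow]
    linear_combination (-1) ^ k * v ^ (k + s) * θ ^ (n - 2 * (k + s)) * h
  have halt (t : ℕ) : ∑ k ∈ range (t + 1), (-1 : R) ^ k * t.choose k = if t = 0 then 1 else 0 := by
    simpa using congrArg (Int.cast : ℤ → R) (Int.alternating_sum_range_choose (n := t))
  calc _ = ∑ k ∈ range (n / 2 + 1), ∑ s ∈ range (n / 2 + 1 - k),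
        ((n.choose (2 * k) * (2 * k - 1)‼ : ℕ) : R) * (-v) ^ k *
          ((((n - 2 * k).choose (2 * s) * (2 * s - 1)‼ : ℕ) : R) * v ^ s *
            θ ^ (n - 2 * k - 2 * s)) := by
        refine sum_congr rfl fun k hk => ?_
        rw [gaussianMoment, mul_sum, show (n - 2 * k) / 2 + 1 = n / 2 + 1 - k by
          rw [mem_range] at hk; omega]
    _ = ∑ t ∈ range (n / 2 + 1), ∑ k ∈ range (t + 1), (-1) ^ k * t.choose k * c t := by
        rw [← sum_range_diag_flip]
        refine sum_congr rfl fun t _ => sum_congr rfl fun k hk => ?_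
        rw [← hterm t k (Nat.lt_succ_iff.mp (mem_range.mp hk))]
        ring
    _ = θ ^ n := by
        simp_rw [← sum_mul, halt, ite_mul, one_mul, zero_mul, sum_ite_eq', mem_range]
        simp [c]

end GaussianMoment

namespace ProbabilityTheory

theorem hasDerivAt_gaussianPDFReal (μ : ℝ) (v : ℝ≥0) (x : ℝ) :
    HasDerivAt (gaussianPDFReal μ v) (-((x - μ) / v) * gaussianPDFReal μ v x) x := by
  have h : HasDerivAt (fun x => -(x - μ) ^ 2 / (2 * v)) (-((x - μ) / v)) x :=
    ((((hasDerivAt_id x).sub_const μ).pow 2).neg.div_const (2 * (v : ℝ))).congr_deriv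
      (by simp only [id, Nat.cast_ofNat]; ring)
  exact (h.exp.const_mul (√(2 * Real.pi * v))⁻¹).congr_deriv (by rw [gaussianPDFReal_def]; ring)

theorem integrable_pow_gaussianReal (μ : ℝ) (v : ℝ≥0) (n : ℕ) :
    Integrable (fun x => x ^ n) (gaussianReal μ v) :=
  (memLp_id_gaussianReal n).integrable_norm_pow'.mono' (by fun_prop) (by simp)

theorem integrable_pow_mul_gaussianPDFReal (μ : ℝ) (v : ℝ≥0) (n : ℕ) :
    Integrable (fun x => x ^ n * gaussianPDFReal μ v x) := by
  rcases eq_or_ne v 0 with rfl | hv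
  · simp [gaussianPDFReal_zero_var]
  have := integrable_pow_gaussianReal μ v n
  rw [gaussianReal_of_var_ne_zero _ hv, integrable_withDensity_iff_integrable_smul'
    (measurable_gaussianPDF μ v) (ae_of_all _ fun _ => gaussianPDF_lt_top)] at this
  simpa [toReal_gaussianPDF, mul_comm] using this

theorem integral_pow_add_two_gaussianReal_zero (v : ℝ≥0) (n : ℕ) :
    ∫ x, x ^ (n + 2) ∂gaussianReal 0 v = v * (n + 1) * ∫ x, x ^ n ∂gaussianReal 0 v := by
  rcases eq_or_ne v 0 with rfl | hv
  · simp [gaussianReal_zero_var]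
  simp only [integral_gaussianReal_eq_integral_smul hv, smul_eq_mul]
  have hderiv (x : ℝ) : HasDerivAt (fun x => x ^ (n + 1) * gaussianPDFReal 0 v x)
      ((n + 1) * (x ^ n * gaussianPDFReal 0 v x) -
        (v : ℝ)⁻¹ * (x ^ (n + 2) * gaussianPDFReal 0 v x)) x := by
    refine ((hasDerivAt_pow (n + 1) x).mul (hasDerivAt_gaussianPDFReal 0 v x)).congr_deriv ?_
    push_cast
    ring
  have hint (m : ℕ) := integrable_pow_mul_gaussianPDFReal 0 v m
  have hparts := integral_eq_zero_of_hasDerivAt_of_integrable hderiv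
    (((hint n).const_mul _).sub ((hint (n + 2)).const_mul _)) (hint (n + 1))
  rw [integral_sub ((hint n).const_mul _) ((hint (n + 2)).const_mul _), integral_const_mul,
    integral_const_mul, sub_eq_zero] at hparts
  simp_rw [mul_comm (gaussianPDFReal 0 v _)]
  field_simp at hparts ⊢
  linarith

theorem integral_pow_gaussianReal_zero (v : ℝ≥0) :
    ∀ n : ℕ, ∫ x, x ^ n ∂gaussianReal 0 v = if Even n then ((n - 1)‼ : ℝ) * v ^ (n / 2) else 0
  | 0 => by simp
  | 1 => by simp [integral_id_gaussianReal]
  | n + 2 => by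
    rw [integral_pow_add_two_gaussianReal_zero, integral_pow_gaussianReal_zero v n]
    rcases Nat.even_or_odd n with hn | hn
    · have hn2 : Even (n + 2) := hn.add even_two
      rw [if_pos hn, if_pos hn2, show n + 2 - 1 = n + 1 by omega, Nat.doubleFactorial_add_one,
        show (n + 2) / 2 = n / 2 + 1 by omega]
      push_cast
      ring
    · have hn2 : Odd (n + 2) := hn.add_even even_two
      rw [if_neg (Nat.not_even_iff_odd.mpr hn), if_neg (Nat.not_even_iff_odd.mpr hn2), mul_zero]

theorem integral_pow_gaussianReal (θ : ℝ) (v : ℝ≥0) (n : ℕ) :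
    ∫ x, x ^ n ∂gaussianReal θ v = gaussianMoment θ (v : ℝ) n := by
  have hmap : (gaussianReal 0 v).map (· + θ) = gaussianReal θ v := by
    simpa using gaussianReal_map_add_const (μ := 0) (v := v) θ
  rw [← hmap, integral_map (by fun_prop) (by fun_prop)]
  simp_rw [add_pow]
  rw [integral_finsetSum _ fun i _ => ((integrable_pow_gaussianReal 0 v i).mul_const _).mul_const _]
  simp_rw [integral_mul_const, integral_pow_gaussianReal_zero, ite_mul, zero_mul,
    sum_range_ite_even, gaussianMoment]
  refine sum_congr rfl fun s _ => ?_
  rw [Nat.mul_div_cancel_left s two_pos]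
  push_cast
  ring

theorem integral_gaussianMoment_neg_gaussianReal (θ : ℝ) (v : ℝ≥0) (n : ℕ) :
    ∫ x, gaussianMoment x (-(v : ℝ)) n ∂gaussianReal θ v = θ ^ n := by
  simp only [gaussianMoment]
  rw [integral_finsetSum _ fun k _ => (integrable_pow_gaussianReal θ v _).const_mul _]
  simp_rw [integral_const_mul, integral_pow_gaussianReal]
  exact sum_neg_pow_mul_gaussianMoment θ (v : ℝ) n

end ProbabilityTheory

/-- Multivariate debiasing identity (isotropic covariance): for an observation
`X = θ + ε` whose coordinates are independent `N(θ j, v)`, the debiased monomial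
statistic `∏_j ∑_k C_{a j, k} (-1)^k v^k (X j)^(a j - 2k)` is an unbiased estimator
of the monomial `∏_j (θ j)^(a j)`, where `C_{K,k} = (K choose 2k) (2k)!/(k! 2^k)`. -/
theorem debiased_monomial_unbiased (d : ℕ) (θ : Fin d → ℝ) (v : ℝ≥0) (a : Fin d → ℕ) :
    ∫ x : Fin d → ℝ,
        (∏ j : Fin d, ∑ k ∈ Finset.range (a j / 2 + 1),
          (((a j).choose (2 * k) * ((2 * k).factorial / (k.factorial * 2 ^ k)) : ℕ) : ℝ)
            * (-1) ^ k * (v : ℝ) ^ k * (x j) ^ (a j - 2 * k))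
        ∂(Measure.pi fun j : Fin d => gaussianReal (θ j) v)
      = ∏ j : Fin d, (θ j) ^ (a j) := by
  simp_rw [Nat.factorial_two_mul_div, mul_assoc _ ((-1 : ℝ) ^ _), ← neg_pow]
  exact (integral_fintype_prod_eq_prod fun j y => gaussianMoment y (-(v : ℝ)) (a j)).trans
    (prod_congr rfl fun j _ => integral_gaussianMoment_neg_gaussianReal (θ j) v (a j))
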